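/- If the auction system is β-KL-expressive and c-homogeneous, and there is only one slot to display ads (w_1 > 0 and w_k = 0 for all k ≥ 2), then in the full-information setting, for every conservative pure Nash equilibrium b of the PBM-GSP mechanism, SW(OPT(v)) ≤ (c/β) · SW(b); that is, the single-slot pure price of anarchy of PBM-GSP is at most c/β. -/

import Mathlib

/-!
Single-slot GSP is smooth. Call the margin of advertiser `i` on keyword `s` his keyword value
minus the highest competing bid, when positive. Bidding one's value on a keyword secures its
margin, and whoever wins a keyword earns exactly its margin; as expressiveness lets `i` bid on
the best `κ ≥ β · #(relevant keywords)` keywords, at an equilibrium the margins `i` forgoes on the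
keywords he loses are at most a `(1 - β) / β` fraction of those he realises. On every keyword the
highest keyword value is covered by the welfare plus the margin its owner forgoes, because a
conservative winner values the keyword at least at the highest bid. Summing over keywords, `β`
times the keyword-level optimum is at most `SW(b)`, and `c`-homogeneity bounds `SW(OPT)` by `c`
times that optimum.
-/

open Finset MeasureTheory

noncomputable section

namespace PBM

attribute [local instance] Classical.propDecidable

/-- 0-indexed rank of advertiser `i` among the advertisers with a positive bid
(higher bid first, ties broken by smaller index). -/
def rank {n : ℕ} (bs : Fin n → ℝ) (i : Fin n) : ℕ :=
  (Finset.univ.filter fun j => 0 < bs j ∧ (bs i < bs j ∨ (bs j = bs i ∧ j < i))).card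

/-- 0-indexed rank of `i` among all coordinates of `x` (decreasing, ties by index). -/
def rankAll {n : ℕ} (x : Fin n → ℝ) (i : Fin n) : ℕ :=
  (Finset.univ.filter fun j => x i < x j ∨ (x j = x i ∧ j < i)).card

/-- click probability of the slot obtained by `i` (0 if `i` places no positive bid). -/
def slotW {n : ℕ} (w : ℕ → ℝ) (bs : Fin n → ℝ) (i : Fin n) : ℝ :=
  if 0 < bs i then w (rank bs i) else 0

/-- GSP per-click payment of `i`: the bid of the advertiser ranked right below `i`
(0 if there is none). -/
def pay {n : ℕ} (bs : Fin n → ℝ) (i : Fin n) : ℝ :=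
  ∑ j ∈ Finset.univ.filter (fun j => 0 < bs j ∧ rank bs j = rank bs i + 1), bs j

/-- utility of bidder `i` in the single-keyword GSP game with values `vv`. -/
def gspUtil {n : ℕ} (w : ℕ → ℝ) (vv : Fin n → ℝ) (bs : Fin n → ℝ) (i : Fin n) : ℝ :=
  slotW w bs i * (vv i - pay bs i)

variable {Q S : Type*} [Fintype Q] [Fintype S]

/-- expected value of keyword `s` for an advertiser with per-query valuations `vq`. -/
def kwVal (P : Q → ℝ) (pi : Q → S → ℝ) (vq : Q → ℝ) (s : S) : ℝ :=
  (∑ q, pi q s * vq q * P q) / (∑ q, pi q s * P q)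

/-- probability mass of keyword `s`. -/
def mass (P : Q → ℝ) (pi : Q → S → ℝ) (s : S) : ℝ := ∑ q, pi q s * P q

/-- expected utility of advertiser `i` in PBM-GSP. -/
def util {n : ℕ} (P : Q → ℝ) (pi : Q → S → ℝ) (w : ℕ → ℝ)
    (v : Fin n → Q → ℝ) (b : Fin n → S → ℝ) (i : Fin n) : ℝ :=
  ∑ q, P q * ∑ s, pi q s *
    (slotW w (fun j => b j s) i * (v i q - pay (fun j => b j s) i))

/-- social welfare of bid profile `b` in PBM-GSP. -/
def SW {n : ℕ} (P : Q → ℝ) (pi : Q → S → ℝ) (w : ℕ → ℝ)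
    (v : Fin n → Q → ℝ) (b : Fin n → S → ℝ) : ℝ :=
  ∑ q, P q * ∑ s, pi q s * ∑ i, slotW w (fun j => b j s) i * v i q

/-- optimal social welfare. -/
def SWopt {n : ℕ} (P : Q → ℝ) (w : ℕ → ℝ) (v : Fin n → Q → ℝ) : ℝ :=
  ∑ q, P q * ∑ i, w (rankAll (fun j => v j q) i) * v i q

/-- welfare of the truthful keyword-bid profile `𝔳` (each advertiser bids his
expected keyword value on every keyword, no `κ` constraint). -/
def SWtruth {n : ℕ} (P : Q → ℝ) (pi : Q → S → ℝ) (w : ℕ → ℝ)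
    (v : Fin n → Q → ℝ) : ℝ :=
  ∑ q, P q * ∑ s, pi q s *
    ∑ i, w (rankAll (fun j => kwVal P pi (v j) s) i) * kwVal P pi (v i) s

/-- a bid vector is valid if it is nonnegative and positive on at most `κ` keywords. -/
def ValidBid (κ : ℕ) (bi : S → ℝ) : Prop :=
  (∀ s, 0 ≤ bi s) ∧ ((Finset.univ.filter fun s => 0 < bi s).card ≤ κ)

/-- a bid profile is conservative if everybody bids at most his expected keyword value. -/
def Conservative {n : ℕ} (P : Q → ℝ) (pi : Q → S → ℝ)
    (v : Fin n → Q → ℝ) (b : Fin n → S → ℝ) : Prop :=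
  ∀ i s, b i s ≤ kwVal P pi (v i) s

/-- `β`-keyword-level expressiveness for valuation profile `v`. -/
def KLExpressive {n : ℕ} (pi : Q → S → ℝ) (v : Fin n → Q → ℝ) (κ : ℕ) (β : ℝ) : Prop :=
  ∀ i : Fin n,
    β * ((Finset.univ.filter fun s : S => ∃ q, 0 < pi q s ∧ 0 < v i q).card : ℝ) ≤ (κ : ℝ)

/-- expected utility of advertiser `i` in PBM-GSP with reserve price vector `r`. -/
def utilR {n : ℕ} (P : Q → ℝ) (pi : Q → S → ℝ) (w : ℕ → ℝ) (r : S → ℝ)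
    (v : Fin n → Q → ℝ) (b : Fin n → S → ℝ) (i : Fin n) : ℝ :=
  ∑ q, P q * ∑ s, pi q s *
    (if 0 < b i s ∧ r s ≤ b i s then
       w (rank (fun j => b j s) i) * (v i q - max (r s) (pay (fun j => b j s) i))
     else 0)

/-- revenue of PBM-GSP with reserve price vector `r`. -/
def revenue {n : ℕ} (P : Q → ℝ) (pi : Q → S → ℝ) (w : ℕ → ℝ) (r : S → ℝ)
    (b : Fin n → S → ℝ) : ℝ :=
  ∑ q, P q * ∑ s, pi q s * ∑ i,
    (if 0 < b i s ∧ r s ≤ b i s then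
       w (rank (fun j => b j s) i) * max (r s) (pay (fun j => b j s) i)
     else 0)

/-- reserve-restricted social welfare of PBM-GSP with reserve price vector `r`. -/
def SWres {n : ℕ} (P : Q → ℝ) (pi : Q → S → ℝ) (w : ℕ → ℝ) (r : S → ℝ)
    (v : Fin n → Q → ℝ) (b : Fin n → S → ℝ) : ℝ :=
  ∑ q, P q * ∑ s, pi q s * ∑ i,
    (if 0 < b i s ∧ r s ≤ b i s then w (rank (fun j => b j s) i) * v i q else 0)

/-- marginal CDF on keyword `s` of a distribution `T` of keyword-valuation vectors. -/
def cdfT (T : Measure (S → ℝ)) (s : S) (x : ℝ) : ℝ :=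
  ((T.map fun f => f s) (Set.Iic x)).toReal

/-- the virtual value function `φ_s(x) = x - (1 - T_s(x))/t_s(x)`. -/
def virt (T : Measure (S → ℝ)) (td : S → ℝ → ℝ) (s : S) (x : ℝ) : ℝ :=
  x - (1 - cdfT T s x) / td s x

/-- `td s` is the density of the marginal of `T` on keyword `s`. -/
def HasDensity (T : Measure (S → ℝ)) (td : S → ℝ → ℝ) : Prop :=
  ∀ s : S, T.map (fun f => f s)
    = MeasureTheory.volume.withDensity (fun x => ENNReal.ofReal (td s x))

/-- `r` is the vector of Myerson reserve prices. -/
def MyersonReserve (T : Measure (S → ℝ)) (td : S → ℝ → ℝ) (r : S → ℝ) : Prop :=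
  ∀ s : S, 0 ≤ r s ∧ virt T td s (r s) = 0

/-- `T` is an MHR distribution with bounded derivative `η`. -/
def MHRBounded (T : Measure (S → ℝ)) (td : S → ℝ → ℝ) (r : S → ℝ) (η : ℝ) : Prop :=
  ∀ s : S, (∀ x : ℝ, 0 ≤ x → DifferentiableAt ℝ (virt T td s) x) ∧
    (∀ x : ℝ, 0 ≤ x → 1 ≤ deriv (virt T td s) x) ∧
    (∀ x : ℝ, r s ≤ x → deriv (virt T td s) x ≤ η)

/-- `T` has a monotone hazard rate. -/
def MHRhazard (T : Measure (S → ℝ)) (td : S → ℝ → ℝ) : Prop :=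
  ∀ s : S, MonotoneOn (fun x => td s x / (1 - cdfT T s x))
    {x : ℝ | 0 ≤ x ∧ cdfT T s x < 1}

/-- expected revenue (per valuation profile) of PBM-VCG with reserve prices, via
Myerson's lemma: virtual-value surplus of the welfare-maximizing allocation. -/
def revVCG {n : ℕ} (P : Q → ℝ) (pi : Q → S → ℝ) (w : ℕ → ℝ)
    (T : Measure (S → ℝ)) (td : S → ℝ → ℝ) (v : Fin n → Q → ℝ) : ℝ :=
  ∑ s, mass P pi s * ∑ i, w (rankAll (fun j => kwVal P pi (v j) s) i) *
    (if 0 < virt T td s (kwVal P pi (v i) s) then virt T td s (kwVal P pi (v i) s) else 0)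

end PBM

lemma Finset.exists_subset_card_eq_mul_sum_le {α : Type*} [DecidableEq α] (g : α → ℝ)
    (F : Finset α) : ∀ k ≤ #F, ∃ A ⊆ F, #A = k ∧ k * ∑ a ∈ F, g a ≤ #F * ∑ a ∈ A, g a := by
  induction F using Finset.induction_on_min_value g with
  | empty => intro k hk; exact ⟨∅, subset_rfl, by simp_all, by simp⟩
  | insert a F ha hmin ih =>
    intro k hk
    rw [card_insert_of_notMem ha] at hk ⊢
    rcases hk.eq_or_lt with rfl | hk
    · exact ⟨insert a F, subset_rfl, card_insert_of_notMem ha, le_rfl⟩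
    obtain ⟨A, hAF, hA, hsum⟩ := ih k (Nat.lt_succ_iff.1 hk)
    have hga : k * g a ≤ ∑ x ∈ A, g x := by
      simpa [hA] using card_nsmul_le_sum A g (g a) fun x hx => hmin x (hAF hx)
    refine ⟨A, hAF.trans (subset_insert a F), hA, ?_⟩
    rw [sum_insert ha]
    push_cast
    linarith

lemma Finset.exists_card_le_mul_sum_le {α : Type*} [Fintype α] [DecidableEq α] {g : α → ℝ}
    (hg : 0 ≤ g) {β : ℝ} (hβ1 : β ≤ 1) {k : ℕ} (hk : β * #{a | 0 < g a} ≤ k) :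
    ∃ A : Finset α, #A ≤ k ∧ β * ∑ a, g a ≤ ∑ a ∈ A, g a := by
  set F : Finset α := {a | 0 < g a}
  have hF : ∑ a, g a = ∑ a ∈ F, g a :=
    (sum_filter_of_ne fun a _ ha => (hg a).lt_of_ne' ha).symm
  have hF0 : 0 ≤ ∑ a ∈ F, g a := sum_nonneg fun a _ => hg a
  rw [hF]
  rcases le_or_gt #F k with hFk | hFk
  · exact ⟨F, hFk, by nlinarith⟩
  obtain ⟨A, -, hA, hsum⟩ := exists_subset_card_eq_mul_sum_le g F k hFk.le
  refine ⟨A, hA.le, le_of_mul_le_mul_left ?_ (Nat.cast_pos.2 (hFk.trans_le' (Nat.zero_le k)))⟩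
  nlinarith

namespace PBM

attribute [local instance] Classical.propDecidable

open Function

section SingleKeyword

variable {n : ℕ} (bs : Fin n → ℝ)

-- the order behind `rank` and `rankAll`: higher bid first, ties to the smaller index
def bidKey (i : Fin n) : ℝ ×ₗ (Fin n)ᵒᵈ := toLex (bs i, OrderDual.toDual i)

variable {bs}

lemma bidKey_lt_bidKey {i j : Fin n} :
    bidKey bs i < bidKey bs j ↔ bs i < bs j ∨ (bs j = bs i ∧ j < i) := by
  simp [bidKey, Prod.Lex.toLex_lt_toLex, eq_comm]

lemma bidKey_injective : Injective (bidKey bs) := fun _ _ h => by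
  simpa [bidKey] using congrArg (fun x => OrderDual.ofDual (ofLex x).2) h

lemma le_of_bidKey_le {i j : Fin n} (h : bidKey bs i ≤ bidKey bs j) : bs i ≤ bs j :=
  Prod.Lex.monotone_fst _ _ h

lemma rank_eq_zero_iff {i : Fin n} :
    rank bs i = 0 ↔ ∀ j, 0 < bs j → bidKey bs j ≤ bidKey bs i := by
  simp [rank, filter_eq_empty_iff, ← bidKey_lt_bidKey]

lemma rankAll_eq_zero_iff {i : Fin n} :
    rankAll bs i = 0 ↔ ∀ j, bidKey bs j ≤ bidKey bs i := by
  simp [rankAll, filter_eq_empty_iff, ← bidKey_lt_bidKey]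

lemma rank_lt_rank {j k : Fin n} (hk : 0 < bs k) (h : bidKey bs j < bidKey bs k) :
    rank bs k < rank bs j := by
  refine card_lt_card ((ssubset_iff_of_subset ?_).2 ⟨k, ?_, ?_⟩)
  · intro l
    simp only [mem_filter, mem_univ, true_and, ← bidKey_lt_bidKey]
    exact fun hl => ⟨hl.1, h.trans hl.2⟩
  · simpa [← bidKey_lt_bidKey] using ⟨hk, h⟩
  · simp [← bidKey_lt_bidKey]

lemma eq_of_rank_eq {j k : Fin n} (hj : 0 < bs j) (hk : 0 < bs k)
    (h : rank bs j = rank bs k) : j = k := by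
  rcases lt_trichotomy (bidKey bs j) (bidKey bs k) with h' | h' | h'
  · exact absurd h (rank_lt_rank hk h').ne'
  · exact bidKey_injective h'
  · exact absurd h (rank_lt_rank hj h').ne

lemma exists_rank_eq_zero {j : Fin n} (hj : 0 < bs j) :
    ∃ k, 0 < bs k ∧ rank bs k = 0 ∧ bs j ≤ bs k := by
  obtain ⟨k, hk, hmax⟩ := exists_max_image {l | 0 < bs l} (bidKey bs) ⟨j, by simpa using hj⟩
  simp only [mem_filter, mem_univ, true_and] at hk hmax
  exact ⟨k, hk, rank_eq_zero_iff.2 hmax, le_of_bidKey_le (hmax j hj)⟩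

lemma pay_nonneg (i : Fin n) : 0 ≤ pay bs i :=
  sum_nonneg fun _ hj => (mem_filter.1 hj).2.1.le

lemma pay_le {i : Fin n} (h0 : rank bs i = 0) {B : ℝ} (hB : 0 ≤ B)
    (hle : ∀ j, j ≠ i → 0 < bs j → bs j ≤ B) : pay bs i ≤ B := by
  set O := ({j | 0 < bs j ∧ rank bs j = rank bs i + 1} : Finset (Fin n))
  have hO : #O ≤ 1 := card_le_one.2 fun j hj k hk => by
    simp only [O, mem_filter, mem_univ, true_and] at hj hk
    exact eq_of_rank_eq hj.1 hk.1 (hj.2.trans hk.2.symm)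
  have hOB : ∀ j ∈ O, bs j ≤ B := fun j hj => by
    simp only [O, mem_filter, mem_univ, true_and] at hj
    exact hle j (by rintro rfl; omega) hj.1
  calc pay bs i ≤ #O • B := sum_le_card_nsmul _ _ _ hOB
    _ ≤ 1 • B := nsmul_le_nsmul_left hB hO
    _ = B := one_nsmul B

lemma le_pay {i j : Fin n} (hi : 0 < bs i) (h0 : rank bs i = 0) (hj : 0 < bs j) (hji : j ≠ i) :
    bs j ≤ pay bs i := by
  obtain ⟨k, hk, hmax⟩ :=
    exists_max_image {l | l ≠ i ∧ 0 < bs l} (bidKey bs) ⟨j, by simpa using ⟨hji, hj⟩⟩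
  simp only [mem_filter, mem_univ, true_and] at hk hmax
  have hki : bidKey bs k < bidKey bs i :=
    (rank_eq_zero_iff.1 h0 k hk.2).lt_of_ne (bidKey_injective.ne hk.1)
  have hrank : rank bs k = 1 := by
    refine card_eq_one.2 ⟨i, eq_singleton_iff_unique_mem.2 ⟨?_, fun l hl => ?_⟩⟩
    · simpa [← bidKey_lt_bidKey] using ⟨hi, hki⟩
    · simp only [mem_filter, mem_univ, true_and, ← bidKey_lt_bidKey] at hl
      by_contra hli
      exact (hmax l ⟨hli, hl.1⟩).not_gt hl.2
  calc bs j ≤ bs k := le_of_bidKey_le (hmax j ⟨hji, hj⟩)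
    _ ≤ pay bs i := single_le_sum (fun l hl => (mem_filter.1 hl).2.1.le)
        (by simpa [hrank, h0] using hk.2)

variable (bs) in
def highestOtherBid (i : Fin n) : ℝ := (univ.erase i).fold max 0 bs

lemma highestOtherBid_le_iff {i : Fin n} {x : ℝ} :
    highestOtherBid bs i ≤ x ↔ 0 ≤ x ∧ ∀ j, j ≠ i → bs j ≤ x := by
  simp [highestOtherBid, fold_max_le]

lemma highestOtherBid_nonneg (i : Fin n) : 0 ≤ highestOtherBid bs i :=
  (le_fold_max 0).2 (Or.inl le_rfl)

lemma le_highestOtherBid {i j : Fin n} (h : j ≠ i) : bs j ≤ highestOtherBid bs i :=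
  (highestOtherBid_le_iff.1 le_rfl).2 j h

lemma highestOtherBid_le_zero_or (i : Fin n) :
    highestOtherBid bs i ≤ 0 ∨ ∃ j, j ≠ i ∧ highestOtherBid bs i ≤ bs j := by
  simpa using (le_fold_max _).1 (le_refl (highestOtherBid bs i))

lemma highestOtherBid_update_self (i : Fin n) (x : ℝ) :
    highestOtherBid (update bs i x) i = highestOtherBid bs i :=
  fold_congr fun _ hj => update_of_ne (ne_of_mem_erase hj) _ _

lemma pay_eq_highestOtherBid {i : Fin n} (hi : 0 < bs i) (h0 : rank bs i = 0) :
    pay bs i = highestOtherBid bs i := by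
  refine le_antisymm (pay_le h0 (highestOtherBid_nonneg i) fun j hji _ => le_highestOtherBid hji)
    (highestOtherBid_le_iff.2 ⟨pay_nonneg i, fun j hji => ?_⟩)
  rcases le_or_gt (bs j) 0 with hj | hj
  · exact hj.trans (pay_nonneg i)
  · exact le_pay hi h0 hj hji

variable (bs) in
def IsWinner (i : Fin n) : Prop := 0 < bs i ∧ rank bs i = 0

def margin (vv bs : Fin n → ℝ) (i : Fin n) : ℝ := max 0 (vv i - highestOtherBid bs i)

lemma margin_nonneg (vv bs : Fin n → ℝ) (i : Fin n) : 0 ≤ margin vv bs i := le_max_left _ _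

lemma pos_of_margin_pos {vv : Fin n → ℝ} {i : Fin n} (h : 0 < margin vv bs i) : 0 < vv i := by
  rcases lt_max_iff.1 h with h | h
  · exact absurd h (lt_irrefl 0)
  · linarith [highestOtherBid_nonneg (bs := bs) i]

section SingleSlot

variable {w : ℕ → ℝ} {vv : Fin n → ℝ} {i : Fin n}

lemma slotW_nonneg (hw0 : ∀ k, 0 ≤ w k) (bs : Fin n → ℝ) (i : Fin n) : 0 ≤ slotW w bs i := by
  unfold slotW
  split_ifs
  exacts [hw0 _, le_rfl]

lemma slotW_of_isWinner (h : IsWinner bs i) : slotW w bs i = w 0 := by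
  simp [slotW, h.1, h.2]

lemma slotW_of_not_isWinner (hwk : ∀ k, 1 ≤ k → w k = 0) (h : ¬IsWinner bs i) :
    slotW w bs i = 0 := by
  unfold slotW
  split_ifs with hi
  exacts [hwk _ (Nat.one_le_iff_ne_zero.2 fun h0 => h ⟨hi, h0⟩), rfl]

lemma gspUtil_le (hwk : ∀ k, 1 ≤ k → w k = 0) (hw : 0 ≤ w 0) :
    gspUtil w vv bs i ≤ if IsWinner bs i then w 0 * margin vv bs i else 0 := by
  by_cases h : IsWinner bs i
  · rw [if_pos h, gspUtil, slotW_of_isWinner h, pay_eq_highestOtherBid h.1 h.2]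
    exact mul_le_mul_of_nonneg_left (le_max_right _ _) hw
  · simp [gspUtil, slotW_of_not_isWinner hwk h, h]

lemma margin_le_gspUtil_update (hwk : ∀ k, 1 ≤ k → w k = 0) (hvi : 0 ≤ vv i) :
    w 0 * margin vv bs i ≤ gspUtil w vv (update bs i (vv i)) i := by
  set bs' := update bs i (vv i)
  have hH : highestOtherBid bs' i = highestOtherBid bs i := highestOtherBid_update_self i _
  by_cases h : IsWinner bs' i
  · have hvH : highestOtherBid bs i ≤ vv i := by
      refine hH ▸ highestOtherBid_le_iff.2 ⟨hvi, fun j hji => ?_⟩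
      rcases le_or_gt (bs' j) 0 with hj | hj
      · exact hj.trans hvi
      · simpa [bs'] using le_of_bidKey_le (rank_eq_zero_iff.1 h.2 j hj)
    rw [gspUtil, slotW_of_isWinner h, pay_eq_highestOtherBid h.1 h.2, hH, margin,
      max_eq_right (sub_nonneg.2 hvH)]
  · have hvH : vv i ≤ highestOtherBid bs i := by
      rcases hvi.lt_or_eq with hvi | hvi
      · obtain ⟨j, hj, hji⟩ : ∃ j, 0 < bs' j ∧ bidKey bs' i < bidKey bs' j := by
          by_contra! hle
          exact h ⟨by simpa [bs'] using hvi, rank_eq_zero_iff.2 fun j hj => hle j hj⟩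
        have hne : j ≠ i := by rintro rfl; exact hji.false
        calc vv i = bs' i := by simp [bs']
          _ ≤ bs' j := le_of_bidKey_le hji.le
          _ = bs j := update_of_ne hne _ _
          _ ≤ highestOtherBid bs i := le_highestOtherBid hne
      · exact hvi ▸ highestOtherBid_nonneg i
    rw [gspUtil, slotW_of_not_isWinner hwk h, zero_mul, margin, max_eq_left (sub_nonpos.2 hvH),
      mul_zero]

lemma ite_margin_le_slotW_mul (hw0 : ∀ k, 0 ≤ w k) (hvi : 0 ≤ vv i) :
    (if IsWinner bs i then w 0 * margin vv bs i else 0) ≤ slotW w bs i * vv i := by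
  split_ifs with h
  · rw [slotW_of_isWinner h]
    exact mul_le_mul_of_nonneg_left (max_le hvi (sub_le_self _ (highestOtherBid_nonneg i))) (hw0 0)
  · exact mul_nonneg (slotW_nonneg hw0 bs i) hvi

lemma le_welfare_of_isWinner (hw0 : ∀ k, 0 ≤ w k) (hv : ∀ j, 0 ≤ vv j) (h : IsWinner bs i) :
    w 0 * vv i ≤ ∑ j, slotW w bs j * vv j := by
  rw [← slotW_of_isWinner (w := w) h]
  exact single_le_sum (fun j _ => mul_nonneg (slotW_nonneg hw0 bs j) (hv j)) (mem_univ i)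

lemma highestOtherBid_le_welfare (hw0 : ∀ k, 0 ≤ w k) (hv : ∀ j, 0 ≤ vv j)
    (hbv : ∀ j, bs j ≤ vv j) (i : Fin n) :
    w 0 * highestOtherBid bs i ≤ ∑ j, slotW w bs j * vv j := by
  have hW : 0 ≤ ∑ j, slotW w bs j * vv j :=
    sum_nonneg fun j _ => mul_nonneg (slotW_nonneg hw0 bs j) (hv j)
  obtain hH | ⟨j, -, hHj⟩ := highestOtherBid_le_zero_or (bs := bs) i
  · exact (mul_nonpos_of_nonneg_of_nonpos (hw0 0) hH).trans hW
  rcases le_or_gt (bs j) 0 with hj | hj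
  · exact (mul_nonpos_of_nonneg_of_nonpos (hw0 0) (hHj.trans hj)).trans hW
  obtain ⟨k, hk, hk0, hjk⟩ := exists_rank_eq_zero hj
  calc w 0 * highestOtherBid bs i ≤ w 0 * vv k :=
        mul_le_mul_of_nonneg_left (hHj.trans (hjk.trans (hbv k))) (hw0 0)
    _ ≤ _ := le_welfare_of_isWinner hw0 hv ⟨hk, hk0⟩

lemma le_ite_margin_add_welfare (hw0 : ∀ k, 0 ≤ w k) (hv : ∀ j, 0 ≤ vv j)
    (hbv : ∀ j, bs j ≤ vv j) (i : Fin n) :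
    w 0 * vv i ≤ (if IsWinner bs i then 0 else w 0 * margin vv bs i) +
      ∑ j, slotW w bs j * vv j := by
  split_ifs with h
  · simpa using le_welfare_of_isWinner hw0 hv h
  · have hvi : vv i ≤ margin vv bs i + highestOtherBid bs i :=
      sub_le_iff_le_add.1 (le_max_right _ _)
    linarith [mul_le_mul_of_nonneg_left hvi (hw0 0), highestOtherBid_le_welfare hw0 hv hbv i]

lemma exists_sum_rankAll_eq (hwk : ∀ k, 1 ≤ k → w k = 0) (hn : 0 < n) (x : Fin n → ℝ) :
    ∃ t, ∑ i, w (rankAll x i) * x i = w 0 * x t := by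
  obtain ⟨t, -, ht⟩ := exists_max_image univ (bidKey x) (univ_nonempty_iff.2 ⟨⟨0, hn⟩⟩)
  have ht0 : rankAll x t = 0 := rankAll_eq_zero_iff.2 fun j => ht j (mem_univ j)
  refine ⟨t, (sum_eq_single t (fun i _ hit => ?_) (by simp)).trans (by rw [ht0])⟩
  have hi0 : rankAll x i ≠ 0 := fun hi0 =>
    hit (bidKey_injective ((ht i (mem_univ i)).antisymm (rankAll_eq_zero_iff.1 hi0 t)))
  rw [hwk _ (Nat.one_le_iff_ne_zero.2 hi0), zero_mul]

end SingleSlot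

end SingleKeyword

section Keywords

variable {Q S : Type*} [Fintype Q] {P : Q → ℝ} {pi : Q → S → ℝ}

lemma mass_nonneg (hP0 : ∀ q, 0 ≤ P q) (hpi0 : ∀ q s, 0 ≤ pi q s) (s : S) :
    0 ≤ mass P pi s :=
  sum_nonneg fun q _ => mul_nonneg (hpi0 q s) (hP0 q)

lemma kwVal_nonneg (hP0 : ∀ q, 0 ≤ P q) (hpi0 : ∀ q s, 0 ≤ pi q s) {x : Q → ℝ} (hx : 0 ≤ x)
    (s : S) : 0 ≤ kwVal P pi x s :=
  div_nonneg (sum_nonneg fun q _ => mul_nonneg (mul_nonneg (hpi0 q s) (hx q)) (hP0 q))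
    (mass_nonneg hP0 hpi0 s)

lemma sum_mul_mul_eq_mass_mul_kwVal (hP0 : ∀ q, 0 ≤ P q) (hpi0 : ∀ q s, 0 ≤ pi q s)
    (x : Q → ℝ) (s : S) (a d : ℝ) :
    ∑ q, P q * (pi q s * (a * (x q - d))) = mass P pi s * (a * (kwVal P pi x s - d)) := by
  have hx : ∑ q, pi q s * x q * P q = mass P pi s * kwVal P pi x s := by
    rcases (mass_nonneg hP0 hpi0 s).eq_or_lt with h | h
    · have h0 := (sum_eq_zero_iff_of_nonneg fun q _ => mul_nonneg (hpi0 q s) (hP0 q)).1 h.symm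
      rw [← h, zero_mul]
      exact sum_eq_zero fun q hq => by linear_combination x q * h0 q hq
    · have h' : ∑ q, pi q s * P q ≠ 0 := h.ne'
      rw [kwVal, mass, mul_div_cancel₀ _ h']
  calc ∑ q, P q * (pi q s * (a * (x q - d)))
      = a * ∑ q, pi q s * x q * P q - a * d * mass P pi s := by
        simp only [mass, mul_sum, ← sum_sub_distrib]
        exact sum_congr rfl fun q _ => by ring
    _ = _ := by rw [hx]; ring

lemma exists_pos_of_kwVal_pos (hP0 : ∀ q, 0 ≤ P q) (hpi0 : ∀ q s, 0 ≤ pi q s) {x : Q → ℝ}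
    {s : S} (h : 0 < kwVal P pi x s) : ∃ q, 0 < pi q s ∧ 0 < x q := by
  have hnum : ∑ _q : Q, (0 : ℝ) < ∑ q, pi q s * x q * P q := by
    by_contra! hle
    exact h.not_ge (div_nonpos_of_nonpos_of_nonneg (by simpa using hle) (mass_nonneg hP0 hpi0 s))
  obtain ⟨q, -, hq⟩ := exists_lt_of_sum_lt hnum
  refine ⟨q, (hpi0 q s).lt_of_ne' fun h => by simp [h] at hq, ?_⟩
  by_contra! hx
  nlinarith [mul_nonneg (hpi0 q s) (hP0 q)]

lemma le_mul_kwVal (hP0 : ∀ q, 0 ≤ P q) (hpi0 : ∀ q s, 0 ≤ pi q s) {x : Q → ℝ} {c : ℝ}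
    {q : Q} {s : S} (hq : 0 < pi q s * P q) (hx : ∀ q', 0 < pi q' s → x q ≤ c * x q') :
    x q ≤ c * kwVal P pi x s := by
  have hm : 0 < ∑ q', pi q' s * P q' :=
    hq.trans_le (single_le_sum (fun q' _ => mul_nonneg (hpi0 q' s) (hP0 q')) (mem_univ q))
  rw [kwVal, ← mul_div_assoc, le_div_iff₀ hm, mul_sum, mul_sum]
  refine sum_le_sum fun q' _ => ?_
  rcases (hpi0 q' s).eq_or_lt with h | h
  · simp [← h]
  · calc x q * (pi q' s * P q') ≤ c * x q' * (pi q' s * P q') :=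
          mul_le_mul_of_nonneg_right (hx q' h) (mul_nonneg h.le (hP0 q'))
      _ = c * (pi q' s * x q' * P q') := by ring

variable [Fintype S] {n : ℕ} {w : ℕ → ℝ} {v : Fin n → Q → ℝ} {b : Fin n → S → ℝ}

lemma util_eq_sum_mass_mul_gspUtil (hP0 : ∀ q, 0 ≤ P q) (hpi0 : ∀ q s, 0 ≤ pi q s)
    (i : Fin n) : util P pi w v b i =
      ∑ s, mass P pi s * gspUtil w (fun j => kwVal P pi (v j) s) (fun j => b j s) i := by
  simp only [util, gspUtil, mul_sum]
  rw [sum_comm]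
  exact sum_congr rfl fun s _ => sum_mul_mul_eq_mass_mul_kwVal hP0 hpi0 (v i) s _ _

lemma SW_eq_sum_mass_mul_welfare (hP0 : ∀ q, 0 ≤ P q) (hpi0 : ∀ q s, 0 ≤ pi q s) :
    SW P pi w v b =
      ∑ s, mass P pi s * ∑ i, slotW w (fun j => b j s) i * kwVal P pi (v i) s := by
  simp only [SW, mul_sum]
  rw [sum_comm]
  refine sum_congr rfl fun s _ => ?_
  rw [sum_comm]
  refine sum_congr rfl fun i _ => ?_
  simpa using sum_mul_mul_eq_mass_mul_kwVal hP0 hpi0 (v i) s (slotW w (fun j => b j s) i) 0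

lemma SWopt_le (hP0 : ∀ q, 0 ≤ P q) (hpi0 : ∀ q s, 0 ≤ pi q s) (hpi1 : ∀ q, ∑ s, pi q s = 1)
    (hw : 0 ≤ w 0) (hwk : ∀ k, 1 ≤ k → w k = 0) (hn : 0 < n) {c : ℝ} (hc : 0 ≤ c)
    (hhom : ∀ i s q₁ q₂, 0 < pi q₁ s → 0 < pi q₂ s → v i q₁ ≤ c * v i q₂) {σ : S → Fin n}
    (hσ : ∀ s j, kwVal P pi (v j) s ≤ kwVal P pi (v (σ s)) s) :
    SWopt P w v ≤ c * ∑ s, mass P pi s * (w 0 * kwVal P pi (v (σ s)) s) := by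
  choose t ht using fun q => exists_sum_rankAll_eq hwk hn (fun j => v j q)
  have hle : ∀ q s, 0 < pi q s * P q → v (t q) q ≤ c * kwVal P pi (v (σ s)) s := fun q s hq =>
    (le_mul_kwVal hP0 hpi0 hq fun q' => hhom _ s q q' (pos_of_mul_pos_left hq (hP0 q))).trans
      (mul_le_mul_of_nonneg_left (hσ s (t q)) hc)
  calc SWopt P w v = ∑ q, ∑ s, pi q s * P q * (w 0 * v (t q) q) := by
        refine sum_congr rfl fun q _ => ?_
        rw [ht, ← sum_mul, ← sum_mul, hpi1, one_mul]
    _ ≤ ∑ q, ∑ s, pi q s * P q * (w 0 * (c * kwVal P pi (v (σ s)) s)) := by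
        refine sum_le_sum fun q _ => sum_le_sum fun s _ => ?_
        rcases (mul_nonneg (hpi0 q s) (hP0 q)).eq_or_lt with h | h
        · simp [← h]
        · exact mul_le_mul_of_nonneg_left (mul_le_mul_of_nonneg_left (hle q s h) hw) h.le
    _ = c * ∑ s, mass P pi s * (w 0 * kwVal P pi (v (σ s)) s) := by
        rw [sum_comm, mul_sum]
        simp only [mass, sum_mul, mul_sum]
        exact sum_congr rfl fun s _ => sum_congr rfl fun q _ => by ring

lemma sum_mass_mul_margin_le_util_update (hP0 : ∀ q, 0 ≤ P q) (hpi0 : ∀ q s, 0 ≤ pi q s)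
    (hwk : ∀ k, 1 ≤ k → w k = 0) (hv0 : ∀ i q, 0 ≤ v i q) (i : Fin n) (A : Finset S) :
    ∑ s ∈ A, mass P pi s * (w 0 * margin (fun j => kwVal P pi (v j) s) (fun j => b j s) i) ≤
      util P pi w v (update b i fun s => if s ∈ A then kwVal P pi (v i) s else 0) i := by
  set b' : S → ℝ := fun s => if s ∈ A then kwVal P pi (v i) s else 0
  have hb' : ∀ s, (fun j => update b i b' j s) = update (fun j => b j s) i (b' s) :=
    fun s => funext fun j => apply_update (fun _ f => f s) b i b' j
  rw [util_eq_sum_mass_mul_gspUtil hP0 hpi0, ← sum_add_sum_compl A]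
  refine le_add_of_le_of_nonneg (sum_le_sum fun s hsA => ?_) (sum_nonneg fun s hs => ?_)
  · refine mul_le_mul_of_nonneg_left ?_ (mass_nonneg hP0 hpi0 s)
    rw [hb']
    simpa [b', hsA] using margin_le_gspUtil_update (bs := fun j => b j s) hwk
      (kwVal_nonneg hP0 hpi0 (hv0 i) s)
  · have hsA : s ∉ A := mem_compl.1 hs
    have hlose : ¬IsWinner (fun j => update b i b' j s) i := fun h => by
      simpa [b', hsA] using h.1
    simp [gspUtil, slotW_of_not_isWinner hwk hlose]

lemma util_le_sum_mass_mul_ite (hP0 : ∀ q, 0 ≤ P q) (hpi0 : ∀ q s, 0 ≤ pi q s)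
    (hw : 0 ≤ w 0) (hwk : ∀ k, 1 ≤ k → w k = 0) (i : Fin n) :
    util P pi w v b i ≤ ∑ s, mass P pi s * if IsWinner (fun j => b j s) i then
      w 0 * margin (fun j => kwVal P pi (v j) s) (fun j => b j s) i else 0 := by
  rw [util_eq_sum_mass_mul_gspUtil hP0 hpi0]
  exact sum_le_sum fun s _ =>
    mul_le_mul_of_nonneg_left (gspUtil_le hwk hw) (mass_nonneg hP0 hpi0 s)

lemma mul_sum_mass_margin_le_of_isNash (hP0 : ∀ q, 0 ≤ P q) (hpi0 : ∀ q s, 0 ≤ pi q s)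
    (hw : 0 ≤ w 0) (hwk : ∀ k, 1 ≤ k → w k = 0) (hv0 : ∀ i q, 0 ≤ v i q) {κ : ℕ} {β : ℝ}
    (hβ0 : 0 ≤ β) (hβ1 : β ≤ 1) (hKL : KLExpressive pi v κ β)
    (hNE : ∀ i b', ValidBid κ b' → util P pi w v (update b i b') i ≤ util P pi w v b i)
    (i : Fin n) :
    β * ∑ s, mass P pi s * (w 0 * margin (fun j => kwVal P pi (v j) s) (fun j => b j s) i) ≤
      ∑ s, mass P pi s * if IsWinner (fun j => b j s) i then
        w 0 * margin (fun j => kwVal P pi (v j) s) (fun j => b j s) i else 0 := by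
  set g : S → ℝ := fun s =>
    mass P pi s * (w 0 * margin (fun j => kwVal P pi (v j) s) (fun j => b j s) i)
  have hg : 0 ≤ g := fun s =>
    mul_nonneg (mass_nonneg hP0 hpi0 s) (mul_nonneg hw (margin_nonneg _ _ i))
  have hsupp : β * #{s | 0 < g s} ≤ κ := by
    refine le_trans (mul_le_mul_of_nonneg_left (Nat.cast_le.2 (card_le_card fun s hs => ?_)) hβ0)
      (hKL i)
    simp only [g, mem_filter, mem_univ, true_and] at hs ⊢
    have hm : 0 < margin (fun j => kwVal P pi (v j) s) (fun j => b j s) i :=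
      (margin_nonneg _ _ i).lt_of_ne fun h => by rw [← h, mul_zero, mul_zero] at hs; exact hs.false
    exact exists_pos_of_kwVal_pos hP0 hpi0 (pos_of_margin_pos hm)
  obtain ⟨A, hA, hgA⟩ := exists_card_le_mul_sum_le hg hβ1 hsupp
  have hvalid : ValidBid κ fun s => if s ∈ A then kwVal P pi (v i) s else 0 := by
    refine ⟨fun s => ?_, (card_le_card fun s hs => ?_).trans hA⟩
    · dsimp only
      split_ifs
      exacts [kwVal_nonneg hP0 hpi0 (hv0 i) s, le_rfl]
    · by_contra h
      simp [h] at hs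
  calc β * ∑ s, g s ≤ ∑ s ∈ A, g s := hgA
    _ ≤ _ := sum_mass_mul_margin_le_util_update hP0 hpi0 hwk hv0 i A
    _ ≤ util P pi w v b i := hNE i _ hvalid
    _ ≤ _ := util_le_sum_mass_mul_ite hP0 hpi0 hw hwk i

lemma sum_sum_mass_mul_ite_le_SW (hP0 : ∀ q, 0 ≤ P q) (hpi0 : ∀ q s, 0 ≤ pi q s)
    (hw0 : ∀ k, 0 ≤ w k) (hv0 : ∀ i q, 0 ≤ v i q) :
    ∑ i, ∑ s, mass P pi s * (if IsWinner (fun j => b j s) i then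
      w 0 * margin (fun j => kwVal P pi (v j) s) (fun j => b j s) i else 0) ≤ SW P pi w v b := by
  rw [SW_eq_sum_mass_mul_welfare hP0 hpi0, sum_comm]
  refine sum_le_sum fun s _ => ?_
  rw [← mul_sum]
  exact mul_le_mul_of_nonneg_left (sum_le_sum fun i _ =>
    ite_margin_le_slotW_mul hw0 (kwVal_nonneg hP0 hpi0 (hv0 i) s)) (mass_nonneg hP0 hpi0 s)

lemma sum_mass_mul_kwVal_le (hP0 : ∀ q, 0 ≤ P q) (hpi0 : ∀ q s, 0 ≤ pi q s)
    (hw0 : ∀ k, 0 ≤ w k) (hv0 : ∀ i q, 0 ≤ v i q) (hcons : Conservative P pi v b)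
    (σ : S → Fin n) :
    ∑ s, mass P pi s * (w 0 * kwVal P pi (v (σ s)) s) ≤
      ∑ s, mass P pi s * (if IsWinner (fun j => b j s) (σ s) then 0 else
        w 0 * margin (fun j => kwVal P pi (v j) s) (fun j => b j s) (σ s)) + SW P pi w v b := by
  rw [SW_eq_sum_mass_mul_welfare hP0 hpi0, ← sum_add_distrib]
  refine sum_le_sum fun s _ => ?_
  rw [← mul_add]
  exact mul_le_mul_of_nonneg_left (le_ite_margin_add_welfare hw0
    (fun j => kwVal_nonneg hP0 hpi0 (hv0 j) s) (fun j => hcons j s) (σ s)) (mass_nonneg hP0 hpi0 s)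

lemma mul_sum_mass_kwVal_le_SW (hP0 : ∀ q, 0 ≤ P q) (hpi0 : ∀ q s, 0 ≤ pi q s)
    (hw0 : ∀ k, 0 ≤ w k) (hv0 : ∀ i q, 0 ≤ v i q) (hcons : Conservative P pi v b) {β : ℝ}
    (hβ0 : 0 ≤ β) (hβ1 : β ≤ 1)
    (hnash : ∀ i, β * ∑ s, mass P pi s *
        (w 0 * margin (fun j => kwVal P pi (v j) s) (fun j => b j s) i) ≤
      ∑ s, mass P pi s * if IsWinner (fun j => b j s) i then
        w 0 * margin (fun j => kwVal P pi (v j) s) (fun j => b j s) i else 0)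
    (σ : S → Fin n) :
    β * ∑ s, mass P pi s * (w 0 * kwVal P pi (v (σ s)) s) ≤ SW P pi w v b := by
  set M : Fin n → S → ℝ := fun i s =>
    w 0 * margin (fun j => kwVal P pi (v j) s) (fun j => b j s) i
  set win : Fin n → S → ℝ := fun i s => if IsWinner (fun j => b j s) i then M i s else 0
  set lose : Fin n → S → ℝ := fun i s => if IsWinner (fun j => b j s) i then 0 else M i s
  have hσ : ∑ s, mass P pi s * lose (σ s) s ≤ ∑ i, ∑ s, mass P pi s * lose i s := by
    rw [sum_comm]
    refine sum_le_sum fun s _ => single_le_sum (f := fun i => mass P pi s * lose i s)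
      (fun i _ => mul_nonneg (mass_nonneg hP0 hpi0 s) ?_) (mem_univ (σ s))
    simp only [lose]
    split_ifs
    exacts [le_rfl, mul_nonneg (hw0 0) (margin_nonneg _ _ i)]
  have hlose : β * ∑ i, ∑ s, mass P pi s * lose i s ≤
      (1 - β) * ∑ i, ∑ s, mass P pi s * win i s := by
    rw [mul_sum, mul_sum]
    refine sum_le_sum fun i _ => ?_
    have hsplit : ∑ s, mass P pi s * M i s =
        ∑ s, mass P pi s * win i s + ∑ s, mass P pi s * lose i s := by
      rw [← sum_add_distrib]
      refine sum_congr rfl fun s _ => ?_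
      simp only [win, lose]
      split_ifs <;> ring
    have h : β * ∑ s, mass P pi s * M i s ≤ ∑ s, mass P pi s * win i s := hnash i
    nlinarith
  linarith [mul_le_mul_of_nonneg_left (sum_mass_mul_kwVal_le hP0 hpi0 hw0 hv0 hcons σ) hβ0,
    mul_le_mul_of_nonneg_left hσ hβ0,
    mul_le_mul_of_nonneg_left (sum_sum_mass_mul_ite_le_SW hP0 hpi0 hw0 hv0 (b := b))
      (sub_nonneg.2 hβ1)]

end Keywords

end PBM

open PBM in
theorem stmt9_general
    {Q S : Type*} [Fintype Q] [Fintype S] {n : ℕ}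
    (P : Q → ℝ) (pi : Q → S → ℝ) (w : ℕ → ℝ) (κ : ℕ)
    (hP0 : ∀ q, 0 ≤ P q)
    (hpi0 : ∀ q s, 0 ≤ pi q s) (hpi1 : ∀ q, ∑ s, pi q s = 1)
    (hw0 : ∀ k, 0 ≤ w k)
    (hwk : ∀ k, 1 ≤ k → w k = 0)
    (β c : ℝ) (hβ : 0 < β) (hβ1 : β ≤ 1) (hc : 0 < c)
    (v : Fin n → Q → ℝ) (hv0 : ∀ i q, 0 ≤ v i q)
    (hKL : KLExpressive pi v κ β)
    (hhom : ∀ (i : Fin n) (s : S) (q₁ q₂ : Q), 0 < pi q₁ s → 0 < pi q₂ s →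
      v i q₁ ≤ c * v i q₂)
    (b : Fin n → S → ℝ)
    (hcons : Conservative P pi v b)
    (hNE : ∀ (i : Fin n) (b' : S → ℝ), ValidBid κ b' →
      util P pi w v (Function.update b i b') i ≤ util P pi w v b i) :
    SWopt P w v ≤ (c / β) * SW P pi w v b := by
  obtain rfl | hn := n.eq_zero_or_pos
  · simp [SWopt, SW]
  have : Nonempty (Fin n) := ⟨⟨0, hn⟩⟩
  choose σ hσ using fun s => Finite.exists_max fun j => kwVal P pi (v j) s
  have hopt := SWopt_le hP0 hpi0 hpi1 (hw0 0) hwk hn hc.le hhom hσ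
  have hsmooth := mul_sum_mass_kwVal_le_SW hP0 hpi0 hw0 hv0 hcons hβ.le hβ1
    (mul_sum_mass_margin_le_of_isNash hP0 hpi0 (hw0 0) hwk hv0 hβ.le hβ1 hKL hNE) σ
  calc SWopt P w v ≤ c * ∑ s, mass P pi s * (w 0 * kwVal P pi (v (σ s)) s) := hopt
    _ = c / β * (β * ∑ s, mass P pi s * (w 0 * kwVal P pi (v (σ s)) s)) := by
        rw [← mul_assoc, div_mul_cancel₀ c hβ.ne']
    _ ≤ c / β * SW P pi w v b := mul_le_mul_of_nonneg_left hsmooth (div_nonneg hc.le hβ.le)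

open PBM in
/-- full-information single-slot pure PoA of PBM-GSP: if the
auction system is `β`-KL-expressive and `c`-homogeneous and there is a single
slot, then for every conservative pure Nash equilibrium `b`,
`SW(OPT(v)) ≤ (c/β)·SW(b)`. -/
theorem stmt9
    {Q S : Type*} [Fintype Q] [Fintype S] {n : ℕ}
    (P : Q → ℝ) (pi : Q → S → ℝ) (w : ℕ → ℝ) (κ : ℕ)
    (hP0 : ∀ q, 0 ≤ P q) (hP1 : ∑ q, P q = 1)
    (hpi0 : ∀ q s, 0 ≤ pi q s) (hpi1 : ∀ q, ∑ s, pi q s = 1)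
    (hS : ∀ s : S, ∃ q, 0 < pi q s)
    (hw0 : ∀ k, 0 ≤ w k) (hκ : 0 < κ)
    (hw1 : 0 < w 0) (hwk : ∀ k, 1 ≤ k → w k = 0)
    (β c : ℝ) (hβ : 0 < β) (hβ1 : β ≤ 1) (hc : 0 < c)
    (v : Fin n → Q → ℝ) (hv0 : ∀ i q, 0 ≤ v i q)
    (hKL : KLExpressive pi v κ β)
    (hhom : ∀ (i : Fin n) (s : S) (q₁ q₂ : Q), 0 < pi q₁ s → 0 < pi q₂ s →
      v i q₁ ≤ c * v i q₂)
    (b : Fin n → S → ℝ)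
    (hvalid : ∀ i, ValidBid κ (b i))
    (hcons : Conservative P pi v b)
    (hNE : ∀ (i : Fin n) (b' : S → ℝ), ValidBid κ b' →
      util P pi w v (Function.update b i b') i ≤ util P pi w v b i) :
    SWopt P w v ≤ (c / β) * SW P pi w v b :=
  stmt9_general P pi w κ hP0 hpi0 hpi1 hw0 hwk β c hβ hβ1 hc v hv0 hKL hhom b hcons hNE
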